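/- arXiv:1701.06955 — 5 statements merged into one kernel-verified Lean document; each statement's English description precedes it below -/
import Mathlib

section
/- Under the FK-dependent distribution on {1,...,K}^n, each coordinate is identically distributed: for every r ∈ {1,...,n} and every category i, P(ε_r = i) = p_i. -/
open Finset

/-!
Given its first coordinate `a`, an FK-dependent sequence has independent remaining coordinates
with law `q_a(c) = p_c (1 - δ) + δ [c = a]`. Each `q_a` sums to `1`, so summing out the
unconstrained coordinates leaves `p_i` when `r` is the first coordinate and `∑_a p_a q_a(i)`
otherwise; the latter equals `p_i` because `p` is stationary for `q`.
-/

/-- Probability of an FK-dependent sequence `e : Fin N → Fin K`: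
`P(e) = p_{e₀} · ∏_{j≠0} (pᵢ⁺)^{[e_j = e₀]} · ∏_{l≠e₀} (p_l⁻)^{[e_j = l]}`
with `pᵢ⁺ = pᵢ + δ(1−pᵢ)` and `pᵢ⁻ = pᵢ(1−δ)`. -/
noncomputable def fkP {K N : ℕ} [NeZero N] (p : Fin K → ℝ) (δ : ℝ)
    (e : Fin N → Fin K) : ℝ :=
  p (e 0) * ∏ j ∈ Finset.univ.filter (fun j : Fin N => j ≠ 0),
    (if e j = e 0 then p (e 0) + δ * (1 - p (e 0)) else p (e j) * (1 - δ))

section ProductWeight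

variable {ι α R : Type*} [Fintype ι] [DecidableEq ι] [Fintype α] [DecidableEq α]
  [CommSemiring R]

theorem sum_filter_apply_eq_prod (f : ι → α → R) (r : ι) (i : α) :
    ∑ e ∈ univ.filter (fun e : ι → α => e r = i), ∏ j, f j (e j)
      = f r i * ∏ j ∈ univ.erase r, ∑ c, f j c := by
  set g : ι → α → R := fun j c => if j = r then (if c = i then f j c else 0) else f j c
  have hg : ∀ e : ι → α, ∏ j, g j (e j) = if e r = i then ∏ j, f j (e j) else 0 := by
    intro e
    split_ifs with he
    · exact prod_congr rfl fun j _ => by by_cases hj : j = r <;> simp [g, hj, he]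
    · exact prod_eq_zero (mem_univ r) (by simp [g, he])
  calc ∑ e ∈ univ.filter (fun e : ι → α => e r = i), ∏ j, f j (e j)
      = ∑ e : ι → α, ∏ j, g j (e j) := by simp only [hg, sum_filter]
    _ = ∏ j, ∑ c, g j c := (Fintype.prod_sum g).symm
    _ = (∑ c, g r c) * ∏ j ∈ univ.erase r, ∑ c, g j c := (mul_prod_erase _ _ (mem_univ r)).symm
    _ = f r i * ∏ j ∈ univ.erase r, ∑ c, f j c := by
        congr 1
        · simp [g]
        · exact prod_congr rfl fun j hj => by simp [g, ne_of_mem_erase hj]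

end ProductWeight

section HubWeight

variable {ι α R : Type*} [DecidableEq ι] [Fintype α] [DecidableEq α] [CommSemiring R]

/-- The product weight obtained from `hubWeight` by fixing the hub value to `a`. -/
def hubFactor (μ : α → R) (κ : α → α → R) (o : ι) (a : α) (j : ι) (c : α) : R :=
  if j = o then (if c = a then μ a else 0) else κ a c

theorem sum_hubFactor (μ : α → R) {κ : α → α → R} (hκ : ∀ a, ∑ c, κ a c = 1) (o : ι) (a : α)
    (j : ι) : ∑ c, hubFactor μ κ o a j c = if j = o then μ a else 1 := by
  by_cases hj : j = o <;> simp [hubFactor, hj, hκ]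

variable [Fintype ι]

/-- The law of a random sequence whose hub coordinate `o` is drawn from `μ`, after which every
other coordinate is drawn independently from the row `κ (e o)`. -/
def hubWeight (μ : α → R) (κ : α → α → R) (o : ι) (e : ι → α) : R :=
  μ (e o) * ∏ j ∈ univ.erase o, κ (e o) (e j)

theorem hubWeight_eq_sum_prod_hubFactor (μ : α → R) (κ : α → α → R) (o : ι) (e : ι → α) :
    hubWeight μ κ o e = ∑ a, ∏ j, hubFactor μ κ o a j (e j) := by
  have hfix : ∀ a, ∏ j, hubFactor μ κ o a j (e j)
      = (if e o = a then μ a else 0) * ∏ j ∈ univ.erase o, κ a (e j) := fun a => by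
    rw [← mul_prod_erase _ _ (mem_univ o)]
    congr 1
    · exact if_pos rfl
    · exact prod_congr rfl fun j hj => if_neg (ne_of_mem_erase hj)
  simp only [hfix, ite_mul, zero_mul, sum_ite_eq, mem_univ, if_true, hubWeight]

theorem sum_filter_hubWeight (μ : α → R) {κ : α → α → R} (hκ : ∀ a, ∑ c, κ a c = 1)
    (o r : ι) (i : α) :
    ∑ e ∈ univ.filter (fun e : ι → α => e r = i), hubWeight μ κ o e
      = ∑ a, hubFactor μ κ o a r i * ∏ j ∈ univ.erase r, if j = o then μ a else 1 := by
  simp only [hubWeight_eq_sum_prod_hubFactor]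
  rw [sum_comm]
  refine sum_congr rfl fun a _ => ?_
  rw [sum_filter_apply_eq_prod]
  simp only [sum_hubFactor μ hκ]

theorem sum_filter_hubWeight_self (μ : α → R) {κ : α → α → R} (hκ : ∀ a, ∑ c, κ a c = 1)
    (o : ι) (i : α) :
    ∑ e ∈ univ.filter (fun e : ι → α => e o = i), hubWeight μ κ o e = μ i := by
  rw [sum_filter_hubWeight μ hκ]
  simp [hubFactor]

theorem sum_filter_hubWeight_of_ne (μ : α → R) {κ : α → α → R} (hκ : ∀ a, ∑ c, κ a c = 1)
    {o r : ι} (hr : r ≠ o) (i : α) :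
    ∑ e ∈ univ.filter (fun e : ι → α => e r = i), hubWeight μ κ o e = ∑ a, μ a * κ a i := by
  rw [sum_filter_hubWeight μ hκ]
  refine sum_congr rfl fun a _ => ?_
  rw [prod_ite_eq' (univ.erase r) o, if_pos (mem_erase.2 ⟨hr.symm, mem_univ o⟩)]
  simp [hubFactor, hr, mul_comm]

end HubWeight

section FKKernel

variable {K : ℕ} (p : Fin K → ℝ) (δ : ℝ)

/-- Row `a` is the law of a non-first coordinate given that the first one equals `a`. -/
noncomputable def fkKernel (a c : Fin K) : ℝ :=
  if c = a then p a + δ * (1 - p a) else p c * (1 - δ)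

theorem fkKernel_eq (a c : Fin K) :
    fkKernel p δ a c = p c * (1 - δ) + if c = a then δ else 0 := by
  unfold fkKernel
  split_ifs with h
  · subst h; ring
  · ring

variable {p}

theorem sum_fkKernel (hsum : ∑ i, p i = 1) (a : Fin K) : ∑ c, fkKernel p δ a c = 1 := by
  simp [fkKernel_eq, sum_add_distrib, ← sum_mul, hsum]

theorem sum_mul_fkKernel (hsum : ∑ i, p i = 1) (i : Fin K) :
    ∑ a, p a * fkKernel p δ a i = p i := by
  simp only [fkKernel_eq, mul_add, mul_ite, mul_zero, sum_add_distrib, ← sum_mul, hsum,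
    sum_ite_eq, mem_univ, if_true]
  ring

theorem fkP_eq_hubWeight {N : ℕ} [NeZero N] (e : Fin N → Fin K) :
    fkP p δ e = hubWeight p (fkKernel p δ) 0 e := by
  rw [fkP, hubWeight, filter_ne']
  rfl

end FKKernel

theorem fkP_identically_distributed_general (K N : ℕ) [NeZero N]
    (p : Fin K → ℝ) (hsum : ∑ i, p i = 1)
    (δ : ℝ) (r : Fin N) (i : Fin K) :
    ∑ e ∈ Finset.univ.filter (fun e : Fin N → Fin K => e r = i), fkP p δ e
      = p i := by
  simp only [fkP_eq_hubWeight]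
  rcases eq_or_ne r 0 with rfl | hr
  · exact sum_filter_hubWeight_self p (sum_fkKernel δ hsum) 0 i
  · rw [sum_filter_hubWeight_of_ne p (sum_fkKernel δ hsum) hr, sum_mul_fkKernel δ hsum]

/-- each coordinate of an FK-dependent sequence is identically
distributed: `P(ε_r = i) = p_i` for every coordinate `r` and category `i`. -/
theorem fkP_identically_distributed (K N : ℕ) (hK : 1 ≤ K) [NeZero N]
    (p : Fin K → ℝ) (hp : ∀ i, 0 < p i ∧ p i < 1) (hsum : ∑ i, p i = 1)
    (δ : ℝ) (hδ0 : 0 ≤ δ) (hδ1 : δ ≤ 1) (r : Fin N) (i : Fin K) :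
    ∑ e ∈ Finset.univ.filter (fun e : Fin N → Fin K => e r = i), fkP p δ e
      = p i :=
  fkP_identically_distributed_general K N p hsum δ r i
end

section
/- For 2 ≤ ι < τ, P(ε_ι = i, ε_τ = i) = p_i·(p_i^+)^2 + (p_i^-)^2·(1 − p_i), and for j ≠ i, P(ε_ι = i, ε_τ = j) = p_i·p_i^+·p_j^- + p_j·p_i^-·p_j^+ + ∑_{l≠i,l≠j} p_l·p_i^-·p_j^-. -/
/-!
Conditionally on the first symbol `e 0 = a`, the later symbols of an FK-dependent sequence are
independent, each distributed as `b ↦ fkStep p δ a b` (`p_a⁺` at `b = a`, `p_b⁻` elsewhere),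
a probability vector because `∑ p = 1`. Hence for two later positions
`P(ε_ι = i, ε_τ = j) = ∑ₐ p_a · fkStep a i · fkStep a j`, and the two formulas come from
splitting off the terms `a = i` and `a = j` of this sum.
-/

open Finset

theorem Finset.sum_filter_prod_eq_prod_of_sum_eq_one {ι α R : Type*} [Fintype ι]
    [DecidableEq ι] [Fintype α] [CommSemiring R] (g : ι → α → R)
    (S : Finset ι) (x : ι → α) [DecidablePred fun e : ι → α => ∀ k ∈ S, e k = x k]
    (hg : ∀ k ∉ S, ∑ b, g k b = 1) :
    ∑ e ∈ univ.filter (fun e : ι → α => ∀ k ∈ S, e k = x k), ∏ k, g k (e k)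
      = ∏ k ∈ S, g k (x k) := by
  have hfilter : univ.filter (fun e : ι → α => ∀ k ∈ S, e k = x k)
      = Fintype.piFinset fun k => if k ∈ S then {x k} else univ := by
    ext e
    simp only [mem_filter, mem_univ, true_and, Fintype.mem_piFinset]
    refine forall_congr' fun k => ?_
    split_ifs <;> simp_all
  rw [hfilter, ← prod_univ_sum (fun k => if k ∈ S then {x k} else univ) g,
    ← Fintype.prod_ite_mem S]
  refine Fintype.prod_congr _ _ fun k => ?_
  split_ifs with hk
  · exact sum_singleton _ _
  · exact hg k hk

section FK

variable {K : ℕ} (p : Fin K → ℝ) (δ : ℝ)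

noncomputable def fkStep (a b : Fin K) : ℝ :=
  if b = a then p a + δ * (1 - p a) else p b * (1 - δ)

theorem fkP_eq_mul_prod_fkStep {N : ℕ} [NeZero N] (e : Fin N → Fin K) :
    fkP p δ e = p (e 0) * ∏ k ∈ univ.filter (· ≠ 0), fkStep p δ (e 0) (e k) :=
  rfl

variable {p}

theorem sum_erase_eq_one_sub (hsum : ∑ i, p i = 1) (a : Fin K) :
    ∑ b ∈ univ.erase a, p b = 1 - p a := by
  rw [sum_erase_eq_sub (mem_univ a), hsum]

theorem fkStep_of_ne {a b : Fin K} (h : b ≠ a) : fkStep p δ a b = p b * (1 - δ) :=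
  if_neg h

theorem sum_fkStep_eq_one (hsum : ∑ i, p i = 1) (a : Fin K) : ∑ b, fkStep p δ a b = 1 := by
  have hrest : ∑ b ∈ univ.erase a, fkStep p δ a b = (1 - p a) * (1 - δ) := by
    rw [← sum_erase_eq_one_sub hsum a, sum_mul]
    exact sum_congr rfl fun b hb => fkStep_of_ne δ (ne_of_mem_erase hb)
  rw [← add_sum_erase univ _ (mem_univ a), hrest, fkStep, if_pos rfl]
  ring

theorem sum_fkP_first_eq {N : ℕ} [NeZero N] (hsum : ∑ i, p i = 1) {ι τ : Fin N}
    (hι : ι ≠ 0) (hτ : τ ≠ 0) (hιτ : ι ≠ τ) (a i j : Fin K) :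
    ∑ e ∈ univ.filter (fun e : Fin N → Fin K => e 0 = a ∧ e ι = i ∧ e τ = j), fkP p δ e
      = p a * fkStep p δ a i * fkStep p δ a j := by
  set g : Fin N → Fin K → ℝ := fun k b => if k = 0 then p b else fkStep p δ a b
  set x : Fin N → Fin K := fun k => if k = ι then i else if k = τ then j else a
  have hg : ∀ k ∉ ({0, ι, τ} : Finset (Fin N)), ∑ b, g k b = 1 := by
    intro k hk
    simp only [mem_insert, mem_singleton, not_or] at hk
    simpa [g, hk.1] using sum_fkStep_eq_one δ hsum a
  calc _ = ∑ e ∈ univ.filter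
          (fun e : Fin N → Fin K => ∀ k ∈ ({0, ι, τ} : Finset (Fin N)), e k = x k),
        ∏ k, g k (e k) := by
        refine sum_congr ?_ fun e he => ?_
        · ext e
          simp [x, hι.symm, hτ.symm, hιτ.symm]
        · have h0 : e 0 = a := by simpa [x, hι.symm, hτ.symm] using (mem_filter.mp he).2 0
          rw [fkP_eq_mul_prod_fkStep, Fintype.prod_eq_mul_prod_compl 0, compl_singleton, h0]
          refine congrArg₂ _ (if_pos rfl).symm (prod_congr (filter_ne' _ _) fun k hk => ?_)
          exact (if_neg (ne_of_mem_erase hk)).symm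
    _ = ∏ k ∈ {0, ι, τ}, g k (x k) := sum_filter_prod_eq_prod_of_sum_eq_one g _ x hg
    _ = _ := by
        rw [prod_insert (by simp [hι.symm, hτ.symm]), prod_pair hιτ]
        simp [g, x, hι, hτ, hι.symm, hτ.symm, hιτ.symm, mul_assoc]

theorem sum_fkP_joint_eq {N : ℕ} [NeZero N] (hsum : ∑ i, p i = 1) {ι τ : Fin N}
    (hι : ι ≠ 0) (hτ : τ ≠ 0) (hιτ : ι ≠ τ) (i j : Fin K) :
    ∑ e ∈ univ.filter (fun e : Fin N → Fin K => e ι = i ∧ e τ = j), fkP p δ e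
      = ∑ a, p a * fkStep p δ a i * fkStep p δ a j := by
  rw [← sum_fiberwise _ (fun e => e 0) (fkP p δ)]
  refine sum_congr rfl fun a _ => ?_
  rw [filter_filter, ← sum_fkP_first_eq δ hsum hι hτ hιτ]
  congr 1
  ext e
  simp only [mem_filter, mem_univ, true_and]
  tauto

theorem sum_mul_fkStep_self (hsum : ∑ i, p i = 1) (i : Fin K) :
    ∑ a, p a * fkStep p δ a i * fkStep p δ a i
      = p i * (p i + δ * (1 - p i)) ^ 2 + (p i * (1 - δ)) ^ 2 * (1 - p i) := by
  have hrest : ∑ a ∈ univ.erase i, p a * fkStep p δ a i * fkStep p δ a i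
      = (p i * (1 - δ)) ^ 2 * (1 - p i) := by
    rw [← sum_erase_eq_one_sub hsum i, mul_sum]
    refine sum_congr rfl fun a ha => ?_
    rw [fkStep_of_ne δ (ne_of_mem_erase ha).symm]
    ring
  rw [← add_sum_erase univ _ (mem_univ i), hrest, fkStep, if_pos rfl]
  ring

theorem sum_mul_fkStep_of_ne {i j : Fin K} (hji : j ≠ i) :
    ∑ a, p a * fkStep p δ a i * fkStep p δ a j
      = p i * (p i + δ * (1 - p i)) * (p j * (1 - δ))
        + p j * (p i * (1 - δ)) * (p j + δ * (1 - p j))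
        + ∑ l ∈ (univ.erase i).erase j, p l * (p i * (1 - δ)) * (p j * (1 - δ)) := by
  rw [← add_sum_erase univ _ (mem_univ i),
    ← add_sum_erase (univ.erase i) _ (mem_erase.mpr ⟨hji, mem_univ j⟩), ← add_assoc]
  refine congrArg₂ _ ?_ (sum_congr rfl fun l hl => ?_)
  · simp only [fkStep, if_neg hji, if_neg hji.symm, if_true]
  · rw [fkStep_of_ne δ (ne_of_mem_erase (mem_of_mem_erase hl)).symm,
      fkStep_of_ne δ (ne_of_mem_erase hl).symm]

end FK

theorem fkP_joint_later_general (K N : ℕ) [NeZero N]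
    (p : Fin K → ℝ) (hsum : ∑ i, p i = 1)
    (δ : ℝ) (ι τ : Fin N) (hι : ι ≠ 0)
    (hιτ : ι < τ) (i j : Fin K) :
    ∑ e ∈ Finset.univ.filter (fun e : Fin N → Fin K => e ι = i ∧ e τ = j),
        fkP p δ e
      = if j = i then
          p i * (p i + δ * (1 - p i)) ^ 2 + (p i * (1 - δ)) ^ 2 * (1 - p i)
        else
          p i * (p i + δ * (1 - p i)) * (p j * (1 - δ))
            + p j * (p i * (1 - δ)) * (p j + δ * (1 - p j))
            + ∑ l ∈ (Finset.univ.erase i).erase j,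
                p l * (p i * (1 - δ)) * (p j * (1 - δ)) := by
  have hτ : τ ≠ 0 := ((Fin.zero_le ι).trans_lt hιτ).ne'
  rw [sum_fkP_joint_eq δ hsum hι hτ hιτ.ne]
  split_ifs with hji
  · rw [hji]
    exact sum_mul_fkStep_self δ hsum i
  · exact sum_mul_fkStep_of_ne δ hji

/-- for `2 ≤ ι < τ`,
`P(ε_ι = i, ε_τ = i) = pᵢ·(pᵢ⁺)² + (pᵢ⁻)²·(1−pᵢ)` and for `j ≠ i`
`P(ε_ι = i, ε_τ = j) = pᵢ·pᵢ⁺·p_j⁻ + p_j·pᵢ⁻·p_j⁺ + ∑_{l≠i,j} p_l·pᵢ⁻·p_j⁻`. -/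
theorem fkP_joint_later (K N : ℕ) (hK : 1 ≤ K) [NeZero N]
    (p : Fin K → ℝ) (hp : ∀ i, 0 < p i ∧ p i < 1) (hsum : ∑ i, p i = 1)
    (δ : ℝ) (hδ0 : 0 ≤ δ) (hδ1 : δ ≤ 1) (ι τ : Fin N) (hι : ι ≠ 0)
    (hιτ : ι < τ) (i j : Fin K) :
    ∑ e ∈ Finset.univ.filter (fun e : Fin N → Fin K => e ι = i ∧ e τ = j),
        fkP p δ e
      = if j = i then
          p i * (p i + δ * (1 - p i)) ^ 2 + (p i * (1 - δ)) ^ 2 * (1 - p i)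
        else
          p i * (p i + δ * (1 - p i)) * (p j * (1 - δ))
            + p j * (p i * (1 - δ)) * (p j + δ * (1 - p j))
            + ∑ l ∈ (Finset.univ.erase i).erase j,
                p l * (p i * (1 - δ)) * (p j * (1 - δ)) :=
  fkP_joint_later_general K N p hsum δ ι τ hι hιτ i j
end

section
/- For 2 ≤ ι < τ, Cov([ε_ι = i],[ε_τ = j]) equals δ²·p_i(1−p_i) if i = j and −δ²·p_i·p_j if i ≠ j. -/
/-!
Under `fkP`, the first coordinate `ε₀` has law `p`, and given `ε₀ = m` the later coordinates are
i.i.d. with law `fkQ p δ · m = (1 - δ) p + δ [· = m]`. Hence every later `ε_ι` has law `p`, and for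
distinct later `ι, τ`,
`P(ε_ι = i, ε_τ = j) = ∑ₘ pₘ Q(i, m) Q(j, m) = (1 - δ²) pᵢ pⱼ + δ² pᵢ [i = j]`.
-/

open Finset

/-- Expectation of a real-valued function of an FK-dependent sequence. -/
noncomputable def fkE {K N : ℕ} [NeZero N] (p : Fin K → ℝ) (δ : ℝ)
    (f : (Fin N → Fin K) → ℝ) : ℝ :=
  ∑ e : Fin N → Fin K, fkP p δ e * f e

noncomputable def fkQ {K : ℕ} (p : Fin K → ℝ) (δ : ℝ) (k m : Fin K) : ℝ :=
  p k * (1 - δ) + δ * if k = m then 1 else 0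

section

variable {K N : ℕ} [NeZero N] {p : Fin K → ℝ} {δ : ℝ}

lemma fkP_eq_mul_prod_fkQ (e : Fin N → Fin K) :
    fkP p δ e = p (e 0) * ∏ j ∈ univ.filter (· ≠ 0), fkQ p δ (e j) (e 0) := by
  unfold fkP fkQ
  congr 1
  refine prod_congr rfl fun j _ => ?_
  split_ifs with h
  · rw [h]; ring
  · ring

lemma sum_fkQ (hsum : ∑ k, p k = 1) (m : Fin K) : ∑ k, fkQ p δ k m = 1 := by
  simp [fkQ, sum_add_distrib, ← sum_mul, hsum]

lemma sum_mul_fkQ (hsum : ∑ k, p k = 1) (k : Fin K) : ∑ m, p m * fkQ p δ k m = p k := by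
  simp [fkQ, mul_add, sum_add_distrib, ← sum_mul, hsum]
  ring

lemma sum_mul_fkQ_mul_fkQ (hsum : ∑ k, p k = 1) (i j : Fin K) :
    ∑ m, p m * (fkQ p δ i m * fkQ p δ j m)
      = (1 - δ ^ 2) * p i * p j + δ ^ 2 * if i = j then p i else 0 := by
  calc ∑ m, p m * (fkQ p δ i m * fkQ p δ j m)
      = ∑ m, ((1 - δ) * p i * (p m * fkQ p δ j m)
          + if i = m then δ * p i * fkQ p δ j i else 0) := by
        refine sum_congr rfl fun m _ => ?_
        by_cases h : i = m
        · subst h; simp [fkQ]; ring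
        · simp [fkQ, h]; ring
    _ = (1 - δ) * p i * p j + δ * p i * fkQ p δ j i := by
        rw [sum_add_distrib, ← mul_sum, sum_mul_fkQ hsum, sum_ite_eq, if_pos (mem_univ _)]
    _ = _ := by
        by_cases h : i = j
        · subst h; simp [fkQ]; ring
        · simp [fkQ, h, Ne.symm h]; ring

lemma fkE_prod_eq_sum_mul_prod (g : Fin N → Fin K → ℝ) :
    fkE p δ (fun e => ∏ j ∈ univ.filter (· ≠ 0), g j (e j))
      = ∑ m, p m * ∏ j ∈ univ.filter (· ≠ 0), ∑ k, fkQ p δ k m * g j k := by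
  have hS : ∀ j : Fin N, j ∈ univ.filter (· ≠ 0) ↔ j ≠ 0 := by simp
  simp only [fkE, fkP_eq_mul_prod_fkQ, mul_assoc, ← prod_mul_distrib, prod_subtype _ hS]
  rw [← (Equiv.funSplitAt 0 (Fin K)).symm.sum_comp, Fintype.sum_prod_type]
  refine sum_congr rfl fun m _ => ?_
  have hne (j : {j : Fin N // j ≠ 0}) : (j : Fin N) ≠ 0 := j.2
  simp [Equiv.funSplitAt, hne, ← mul_sum, Fintype.prod_sum]

lemma fkE_prod_eq_sum_mul_prod_of_zero_notMem (hsum : ∑ k, p k = 1) {T : Finset (Fin N)}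
    (hT : 0 ∉ T) (φ : Fin N → Fin K → ℝ) :
    fkE p δ (fun e => ∏ j ∈ T, φ j (e j))
      = ∑ m, p m * ∏ j ∈ T, ∑ k, fkQ p δ k m * φ j k := by
  have hTS : univ.filter (· ≠ 0) ∩ T = T :=
    inter_eq_right.2 fun j hj => mem_filter.2 ⟨mem_univ j, ne_of_mem_of_not_mem hj hT⟩
  have hprod (F : Fin N → ℝ) :
      ∏ j ∈ univ.filter (· ≠ 0), (if j ∈ T then F j else 1) = ∏ j ∈ T, F j := by
    rw [prod_ite_mem, hTS]
  have hsum_one (m : Fin K) (j : Fin N) :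
      ∑ k, fkQ p δ k m * (if j ∈ T then φ j k else 1)
        = if j ∈ T then ∑ k, fkQ p δ k m * φ j k else 1 := by
    split_ifs
    · rfl
    · simp [sum_fkQ hsum]
  simpa only [hsum_one, ite_apply, Pi.one_apply, hprod] using
    fkE_prod_eq_sum_mul_prod (p := p) (δ := δ) fun j => if j ∈ T then φ j else 1

lemma fkE_apply (hsum : ∑ k, p k = 1) {ι : Fin N} (hι : ι ≠ 0) (φ : Fin K → ℝ) :
    fkE p δ (fun e => φ (e ι)) = ∑ m, p m * ∑ k, fkQ p δ k m * φ k := by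
  simpa using fkE_prod_eq_sum_mul_prod_of_zero_notMem hsum (T := {ι})
    (by simpa using hι.symm) fun _ => φ

lemma fkE_apply_mul_apply (hsum : ∑ k, p k = 1) {ι τ : Fin N} (hι : ι ≠ 0) (hτ : τ ≠ 0)
    (hιτ : ι ≠ τ) (φ ψ : Fin K → ℝ) :
    fkE p δ (fun e => φ (e ι) * ψ (e τ))
      = ∑ m, p m * ((∑ k, fkQ p δ k m * φ k) * ∑ k, fkQ p δ k m * ψ k) := by
  simpa [prod_pair hιτ, Ne.symm hιτ] using
    fkE_prod_eq_sum_mul_prod_of_zero_notMem hsum (T := {ι, τ})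
      (by simp [hι.symm, hτ.symm]) fun l => if l = ι then φ else ψ

end

theorem fkP_cov_later_general (K N : ℕ) [NeZero N]
    (p : Fin K → ℝ) (hsum : ∑ i, p i = 1)
    (δ : ℝ) (ι τ : Fin N) (hι : ι ≠ 0)
    (hιτ : ι < τ) (i j : Fin K) :
    fkE p δ (fun e : Fin N → Fin K =>
        (if e ι = i then (1:ℝ) else 0) * (if e τ = j then 1 else 0))
      - fkE p δ (fun e : Fin N → Fin K => if e ι = i then (1:ℝ) else 0)
        * fkE p δ (fun e : Fin N → Fin K => if e τ = j then (1:ℝ) else 0)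
      = if i = j then δ ^ 2 * p i * (1 - p i) else -(δ ^ 2 * p i * p j) := by
  have hτ : τ ≠ 0 := (lt_trans (Fin.pos_iff_ne_zero.2 hι) hιτ).ne'
  rw [fkE_apply_mul_apply hsum hι hτ hιτ.ne (fun k => if k = i then 1 else 0)
      (fun k => if k = j then 1 else 0),
    fkE_apply hsum hι (fun k => if k = i then 1 else 0),
    fkE_apply hsum hτ (fun k => if k = j then 1 else 0)]
  simp only [mul_ite, mul_one, mul_zero, sum_ite_eq', mem_univ, if_true,
    sum_mul_fkQ hsum, sum_mul_fkQ_mul_fkQ hsum]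
  split_ifs with h
  · subst h; ring
  · ring

/-- for `2 ≤ ι < τ`, `Cov([ε_ι = i],[ε_τ = j]) = δ²·pᵢ(1−pᵢ)`
if `i = j` and `−δ²·pᵢ·p_j` otherwise. -/
theorem fkP_cov_later (K N : ℕ) (hK : 1 ≤ K) [NeZero N]
    (p : Fin K → ℝ) (hp : ∀ i, 0 < p i ∧ p i < 1) (hsum : ∑ i, p i = 1)
    (δ : ℝ) (hδ0 : 0 ≤ δ) (hδ1 : δ ≤ 1) (ι τ : Fin N) (hι : ι ≠ 0)
    (hιτ : ι < τ) (i j : Fin K) :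
    fkE p δ (fun e : Fin N → Fin K =>
        (if e ι = i then (1:ℝ) else 0) * (if e τ = j then 1 else 0))
      - fkE p δ (fun e : Fin N → Fin K => if e ι = i then (1:ℝ) else 0)
        * fkE p δ (fun e : Fin N → Fin K => if e τ = j then (1:ℝ) else 0)
      = if i = j then δ ^ 2 * p i * (1 - p i) else -(δ ^ 2 * p i * p j) :=
  fkP_cov_later_general K N p hsum δ ι τ hι hιτ i j
end

section
/- Let X_i = ∑_{j=1}^N [ε_j = i] be the category counts of an FK-dependent sequence of length N. Then for any count vector x = (x_1,...,x_K) of nonnegative integers summing to N, P(X = x) = ∑_{i=1}^K p_i·((N−1)!/((x_i−1)!·∏_{j≠i} x_j!))·(p_i^+)^{x_i−1}·∏_{j≠i}(p_j^-)^{x_j}, where terms with x_i = 0 are interpreted as 0. -/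
open Finset

/-- Number of coordinates of the sequence `e` equal to category `i`. -/
def fkCount {K N : ℕ} (i : Fin K) (e : Fin N → Fin K) : ℕ :=
  (Finset.univ.filter (fun j : Fin N => e j = i)).card

/-!
Split the sequences with count vector `x` according to their first symbol `i` (necessarily
with `x i ≠ 0`). Once `e 0 = i` is fixed, every later symbol `l` contributes `pᵢ⁺` or `p_l⁻`
according as `l = i` or not, so `P(e)` depends only on the counts: it is
`pᵢ (pᵢ⁺)^{xᵢ-1} ∏_{j≠i} (p_j⁻)^{x_j}`. The tails are the sequences of length `N - 1` with counts
`x - eᵢ`, and there are `(N-1)! / ((xᵢ-1)! ∏_{j≠i} x_j!)` of them, which follows by the same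
first-symbol decomposition and induction on the length.
-/

open Function
open scoped Nat

namespace Finset

variable {ι : Type*} [Fintype ι] [DecidableEq ι]

@[to_additive]
theorem prod_apply_update {α M : Type*} [CommMonoid M]
    (g : ι → α → M) (y : ι → α) (i : ι) (b : α) :
    ∏ l, g l (update y i b l) = g i b * ∏ l ∈ univ.erase i, g l (y l) := by
  rw [← mul_prod_erase _ _ (mem_univ i), update_self]
  congr 1
  exact prod_congr rfl fun l hl => by rw [update_of_ne (ne_of_mem_erase hl)]

theorem sum_update_pred {y : ι → ℕ} {i : ι} (hi : y i ≠ 0) :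
    ∑ l, update y i (y i - 1) l = ∑ l, y l - 1 := by
  rw [sum_apply_update (fun _ a => a), ← add_sum_erase _ _ (mem_univ i)]
  omega

theorem prod_factorial_update_pred {y : ι → ℕ} {i : ι} (hi : y i ≠ 0) :
    y i * ∏ l, (update y i (y i - 1) l)! = ∏ l, (y l)! := by
  rw [prod_apply_update (fun _ a => a !), ← mul_prod_erase _ _ (mem_univ i), ← mul_assoc,
    Nat.mul_factorial_pred hi]

end Finset

section Counts

variable {K M : ℕ}

def seqsWithCounts (M : ℕ) (y : Fin K → ℕ) : Finset (Fin M → Fin K) :=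
  univ.filter fun e => ∀ l, fkCount l e = y l

theorem prod_comp_eq_prod_pow_fkCount {R : Type*} [CommMonoid R] (g : Fin K → R)
    (f : Fin M → Fin K) : ∏ j, g (f j) = ∏ l, g l ^ fkCount l f := by
  simp_rw [fkCount, ← prod_const]
  exact (prod_fiberwise' univ f g).symm

theorem fkCount_cons (l i : Fin K) (f : Fin M → Fin K) :
    fkCount l (Fin.cons i f : Fin (M + 1) → Fin K) = (if i = l then 1 else 0) + fkCount l f := by
  simp only [fkCount, card_filter, Fin.sum_univ_succ, Fin.cons_zero, Fin.cons_succ]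

theorem cons_mem_seqsWithCounts {y : Fin K → ℕ} {i : Fin K} (hi : y i ≠ 0)
    (f : Fin M → Fin K) :
    Fin.cons i f ∈ seqsWithCounts (M + 1) y ↔ f ∈ seqsWithCounts M (update y i (y i - 1)) := by
  simp only [seqsWithCounts, mem_filter, mem_univ, true_and, fkCount_cons]
  refine forall_congr' fun l => ?_
  rcases eq_or_ne l i with rfl | hl
  · simp only [if_true, update_self]
    omega
  · simp [hl, hl.symm]

theorem filter_seqsWithCounts_head_eq {y : Fin K → ℕ} {i : Fin K} (hi : y i ≠ 0) :
    {e ∈ seqsWithCounts (M + 1) y | e 0 = i} =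
      (seqsWithCounts M (update y i (y i - 1))).map
        ⟨Fin.cons i, Fin.cons_right_injective (α := fun _ => Fin K) i⟩ := by
  ext e
  obtain ⟨a, f, rfl⟩ : ∃ a f, e = Fin.cons a f := ⟨e 0, Fin.tail e, (Fin.cons_self_tail e).symm⟩
  rcases eq_or_ne a i with rfl | ha
  · simp [cons_mem_seqsWithCounts hi]
  · simp [ha, Ne.symm ha]

theorem filter_seqsWithCounts_head_eq_of_eq_zero {y : Fin K → ℕ} {i : Fin K} (hi : y i = 0) :
    {e ∈ seqsWithCounts (M + 1) y | e 0 = i} = ∅ := by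
  refine filter_eq_empty_iff.2 fun e he h0 => ?_
  have hcount := (mem_filter.1 he).2 i
  rw [hi, fkCount, card_eq_zero, filter_eq_empty_iff] at hcount
  exact hcount (mem_univ 0) h0

theorem card_seqsWithCounts_mul_prod_factorial (y : Fin K → ℕ) (hy : ∑ l, y l = M) :
    #(seqsWithCounts M y) * ∏ l, (y l)! = M ! := by
  induction M generalizing y with
  | zero =>
    obtain rfl : y = 0 := funext fun l => sum_eq_zero_iff.1 hy l (mem_univ l)
    simp [seqsWithCounts, fkCount]
  | succ M ih =>
    have hfiber (i : Fin K) :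
        #{e ∈ seqsWithCounts (M + 1) y | e 0 = i} * ∏ l, (y l)! = y i * M ! := by
      rcases eq_or_ne (y i) 0 with hi | hi
      · simp [filter_seqsWithCounts_head_eq_of_eq_zero hi, hi]
      · rw [filter_seqsWithCounts_head_eq hi, card_map, ← prod_factorial_update_pred hi,
          mul_left_comm, ih _ (by rw [sum_update_pred hi, hy]; rfl)]
    rw [card_eq_sum_card_fiberwise (fun e _ => mem_univ (e 0)), sum_mul,
      sum_congr rfl fun i _ => hfiber i, ← sum_mul, hy, Nat.factorial_succ]

theorem cast_card_seqsWithCounts {y : Fin K → ℕ} (hy : ∑ l, y l = M) :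
    (#(seqsWithCounts M y) : ℝ) = M ! / ∏ l, ((y l)! : ℝ) := by
  rw [eq_div_iff (by positivity)]
  exact_mod_cast card_seqsWithCounts_mul_prod_factorial y hy

end Counts

section FK

variable {K M : ℕ} (p : Fin K → ℝ) (δ : ℝ)

def fkStepWeight (i l : Fin K) : ℝ :=
  if l = i then p i + δ * (1 - p i) else p l * (1 - δ)

theorem fkP_cons (i : Fin K) (f : Fin M → Fin K) :
    fkP p δ (Fin.cons i f : Fin (M + 1) → Fin K) =
      p i * ∏ l, fkStepWeight p δ i l ^ fkCount l f := by
  rw [← prod_comp_eq_prod_pow_fkCount]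
  simp [fkP, fkStepWeight, prod_filter, Fin.prod_univ_succ, Fin.succ_ne_zero]

theorem prod_fkStepWeight_pow_update (x : Fin K → ℕ) (i : Fin K) (b : ℕ) :
    ∏ l, fkStepWeight p δ i l ^ update x i b l =
      (p i + δ * (1 - p i)) ^ b * ∏ l ∈ univ.erase i, (p l * (1 - δ)) ^ x l := by
  rw [prod_apply_update (fun l a => fkStepWeight p δ i l ^ a), fkStepWeight, if_pos rfl]
  congr 1
  exact prod_congr rfl fun l hl => by rw [fkStepWeight, if_neg (ne_of_mem_erase hl)]

theorem sum_fkP_filter_head_eq {x : Fin K → ℕ} (hx : ∑ l, x l = M + 1) {i : Fin K}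
    (hi : x i ≠ 0) :
    ∑ e ∈ {e ∈ seqsWithCounts (M + 1) x | e 0 = i}, fkP p δ e =
      p i * (M ! / ((x i - 1)! * ∏ j ∈ univ.erase i, ((x j)! : ℝ)))
        * (p i + δ * (1 - p i)) ^ (x i - 1) * ∏ j ∈ univ.erase i, (p j * (1 - δ)) ^ x j := by
  set u := update x i (x i - 1)
  have hfkP : ∀ f ∈ seqsWithCounts M u, fkP p δ (Fin.cons i f) =
      p i * ((p i + δ * (1 - p i)) ^ (x i - 1) * ∏ j ∈ univ.erase i, (p j * (1 - δ)) ^ x j) := by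
    intro f hf
    rw [fkP_cons, ← prod_fkStepWeight_pow_update]
    exact congrArg _ (prod_congr rfl fun l _ => by rw [(mem_filter.1 hf).2 l])
  have hcard : (#(seqsWithCounts M u) : ℝ) =
      M ! / ((x i - 1)! * ∏ j ∈ univ.erase i, ((x j)! : ℝ)) := by
    rw [cast_card_seqsWithCounts (by rw [sum_update_pred hi, hx]; rfl),
      prod_apply_update (fun _ a => (a ! : ℝ))]
  rw [filter_seqsWithCounts_head_eq hi, sum_map]
  simp only [Embedding.coeFn_mk]
  rw [sum_congr rfl hfkP, sum_const, nsmul_eq_mul, hcard]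
  ring

end FK

theorem fk_generalized_multinomial_general (K N : ℕ) [NeZero N]
    (p : Fin K → ℝ) (δ : ℝ) (x : Fin K → ℕ) (hx : ∑ i, x i = N) :
    ∑ e ∈ Finset.univ.filter (fun e : Fin N → Fin K => ∀ i, fkCount i e = x i),
        fkP p δ e
      = ∑ i, (if x i = 0 then 0 else
          p i * ((Nat.factorial (N - 1) : ℝ) /
              ((Nat.factorial (x i - 1) : ℝ) *
                ∏ j ∈ Finset.univ.erase i, (Nat.factorial (x j) : ℝ)))
            * (p i + δ * (1 - p i)) ^ (x i - 1)
            * ∏ j ∈ Finset.univ.erase i, (p j * (1 - δ)) ^ (x j)) := by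
  obtain ⟨M, rfl⟩ := Nat.exists_eq_add_one.2 (NeZero.pos N)
  show ∑ e ∈ seqsWithCounts (M + 1) x, fkP p δ e = _
  rw [← sum_fiberwise _ (fun e => e 0)]
  refine sum_congr rfl fun i _ => ?_
  split_ifs with hi
  · rw [filter_seqsWithCounts_head_eq_of_eq_zero hi, sum_empty]
  · rw [sum_fkP_filter_head_eq p δ hx hi, Nat.add_sub_cancel]

/-- the generalized multinomial distribution. For any count
vector `x` of nonnegative integers summing to `N`,
`P(X = x) = ∑ᵢ pᵢ·((N−1)!/((xᵢ−1)!·∏_{j≠i} x_j!))·(pᵢ⁺)^{xᵢ−1}·∏_{j≠i}(p_j⁻)^{x_j}`,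
terms with `xᵢ = 0` interpreted as 0. -/
theorem fk_generalized_multinomial (K N : ℕ) (hK : 1 ≤ K) [NeZero N]
    (p : Fin K → ℝ) (hp : ∀ i, 0 < p i ∧ p i < 1) (hsum : ∑ i, p i = 1)
    (δ : ℝ) (hδ0 : 0 ≤ δ) (hδ1 : δ ≤ 1)
    (x : Fin K → ℕ) (hx : ∑ i, x i = N) :
    ∑ e ∈ Finset.univ.filter (fun e : Fin N → Fin K => ∀ i, fkCount i e = x i),
        fkP p δ e
      = ∑ i, (if x i = 0 then 0 else
          p i * ((Nat.factorial (N - 1) : ℝ) /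
              ((Nat.factorial (x i - 1) : ℝ) *
                ∏ j ∈ Finset.univ.erase i, (Nat.factorial (x j) : ℝ)))
            * (p i + δ * (1 - p i)) ^ (x i - 1)
            * ∏ j ∈ Finset.univ.erase i, (p j * (1 - δ)) ^ (x j)) :=
  fk_generalized_multinomial_general K N p δ x hx
end

section
/- The generalized multinomial probability mass function sums to 1: ∑_{x_1+...+x_K = N, x_j ≥ 0} ∑_{i=1}^K p_i·((N−1)!/((x_i−1)!·∏_{j≠i} x_j!))·(p_i^+)^{x_i−1}·∏_{j≠i}(p_j^-)^{x_j} = 1, with terms where x_i = 0 interpreted as 0. -/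
/-!
Swap the two sums. For fixed `i`, the substitution `x = y + eᵢ` turns the `i`-th summand,
summed over `x₁ + ⋯ + x_K = N` with `xᵢ ≥ 1`, into `pᵢ` times the multinomial expansion of
`(pᵢ⁺ + ∑_{j ≠ i} pⱼ⁻) ^ (N - 1)`, and the base of that power is `1`. Summing over `i`
leaves `∑ᵢ pᵢ = 1`.
-/

open Finset

theorem sum_pow_eq_sum_antidiagonalTuple {R : Type*} [Field R] [CharZero R] (K M : ℕ)
    (q : Fin K → R) :
    (∑ j, q j) ^ M = ∑ y ∈ Nat.antidiagonalTuple K M,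
      ((M.factorial : R) / ∏ j, ((y j).factorial : R)) * ∏ j, q j ^ y j := by
  rw [sum_pow_eq_sum_piAntidiag, piAntidiag_univ_fin_eq_antidiagonalTuple]
  refine sum_congr rfl fun y hy => ?_
  rw [← Nat.mem_antidiagonalTuple.mp hy, Nat.multinomial, Nat.cast_div
    (Nat.prod_factorial_dvd_factorial_sum _ _) (Nat.cast_ne_zero.mpr (by positivity))]
  push_cast
  rfl

theorem sum_update_add_apply {ι M : Type*} [DecidableEq ι] [AddCommMonoid M] {s : Finset ι}
    {i : ι} (h : i ∈ s) (f : ι → M) (b : M) :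
    ∑ j ∈ s, Function.update f i b j + f i = b + ∑ j ∈ s, f j := by
  rw [sum_update_of_mem h, sum_eq_sum_sdiff_singleton_add h f, add_assoc]

theorem sum_antidiagonalTuple_succ_ite_eq_zero {R : Type*} [AddCommMonoid R] {K : ℕ}
    (M : ℕ) (i : Fin K) (f : (Fin K → ℕ) → R) :
    ∑ x ∈ Nat.antidiagonalTuple K (M + 1), (if x i = 0 then 0 else f x) =
      ∑ y ∈ Nat.antidiagonalTuple K M, f (Function.update y i (y i + 1)) := by
  simp_rw [← ite_not (_ = 0), ← sum_filter]
  have left_inv : ∀ x ∈ (Nat.antidiagonalTuple K (M + 1)).filter (· i ≠ 0),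
      Function.update (Function.update x i (x i - 1)) i (x i - 1 + 1) = x := by
    intro x hx
    rw [Function.update_idem, Nat.sub_add_cancel (Nat.pos_of_ne_zero (mem_filter.mp hx).2),
      Function.update_eq_self]
  refine sum_nbij' (fun x => Function.update x i (x i - 1))
    (fun y => Function.update y i (y i + 1)) ?_ ?_ ?_ ?_ ?_
  · intro x hx
    simp only [mem_filter, Nat.mem_antidiagonalTuple] at hx ⊢
    have := sum_update_add_apply (mem_univ i) x (x i - 1)
    omega
  · intro y hy
    simp only [mem_filter, Nat.mem_antidiagonalTuple] at hy ⊢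
    have := sum_update_add_apply (mem_univ i) y (y i + 1)
    simp only [Function.update_self]
    omega
  · simpa only [Function.update_self] using left_inv
  · intro y _
    simp only [Function.update_idem, Function.update_self, add_tsub_cancel_right,
      Function.update_eq_self]
  · intro x hx
    simp only [Function.update_self, left_inv x hx]

theorem prod_erase_apply_update {ι β M : Type*} [DecidableEq ι] [CommMonoid M] (s : Finset ι)
    (g : ι → β → M) (y : ι → β) (i : ι) (b : β) :
    ∏ j ∈ s.erase i, g j (Function.update y i b j) = ∏ j ∈ s.erase i, g j (y j) :=
  prod_congr rfl fun j hj => by rw [Function.update_of_ne (ne_of_mem_erase hj)]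

theorem sum_antidiagonalTuple_succ_ite_multinomial {R : Type*} [Field R] [CharZero R] {K : ℕ}
    (M : ℕ) (i : Fin K) (r a : R) (c : Fin K → R) :
    ∑ x ∈ Nat.antidiagonalTuple K (M + 1), (if x i = 0 then 0 else
      r * ((M.factorial : R) / (((x i - 1).factorial : R) *
        ∏ j ∈ univ.erase i, ((x j).factorial : R))) * a ^ (x i - 1) *
        ∏ j ∈ univ.erase i, c j ^ x j) =
      r * (a + ∑ j ∈ univ.erase i, c j) ^ M := by
  have hq : a + ∑ j ∈ univ.erase i, c j = ∑ j, Function.update c i a j := by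
    rw [sum_update_of_mem (mem_univ i), sdiff_singleton_eq_erase]
  rw [sum_antidiagonalTuple_succ_ite_eq_zero, hq, sum_pow_eq_sum_antidiagonalTuple, mul_sum]
  refine sum_congr rfl fun y _ => ?_
  rw [← mul_prod_erase univ _ (mem_univ i),
    ← mul_prod_erase univ (fun j => Function.update c i a j ^ y j) (mem_univ i)]
  simp only [Function.update_self, add_tsub_cancel_right,
    prod_erase_apply_update _ (fun (_ : Fin K) (t : ℕ) => (t.factorial : R)),
    prod_erase_apply_update _ (fun j t => t ^ y j),
    prod_erase_apply_update _ (fun j (t : ℕ) => c j ^ t)]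
  ring

theorem fk_generalized_multinomial_sums_to_one_general (K N : ℕ)
    (hN : 1 ≤ N) (p : Fin K → ℝ)
    (hsum : ∑ i, p i = 1) (δ : ℝ) :
    ∑ x ∈ Finset.Nat.antidiagonalTuple K N,
      ∑ i, (if x i = 0 then 0 else
          p i * ((Nat.factorial (N - 1) : ℝ) /
              ((Nat.factorial (x i - 1) : ℝ) *
                ∏ j ∈ Finset.univ.erase i, (Nat.factorial (x j) : ℝ)))
            * (p i + δ * (1 - p i)) ^ (x i - 1)
            * ∏ j ∈ Finset.univ.erase i, (p j * (1 - δ)) ^ (x j)) = 1 := by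
  obtain ⟨M, rfl⟩ := Nat.exists_eq_add_of_le' hN
  have h_base (i : Fin K) : p i + δ * (1 - p i) + ∑ j ∈ univ.erase i, p j * (1 - δ) = 1 := by
    rw [← sum_mul, sum_erase_eq_sub (mem_univ i), hsum]
    ring
  rw [sum_comm, Nat.add_sub_cancel]
  simp only [sum_antidiagonalTuple_succ_ite_multinomial, h_base, one_pow, mul_one, hsum]

/-- the generalized multinomial pmf sums to 1 over all count
vectors `x` with `x₁ + ... + x_K = N` (terms with `xᵢ = 0` interpreted as 0). -/
theorem fk_generalized_multinomial_sums_to_one (K N : ℕ) (hK : 1 ≤ K)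
    (hN : 1 ≤ N) (p : Fin K → ℝ) (hp : ∀ i, 0 < p i ∧ p i < 1)
    (hsum : ∑ i, p i = 1) (δ : ℝ) (hδ0 : 0 ≤ δ) (hδ1 : δ ≤ 1) :
    ∑ x ∈ Finset.Nat.antidiagonalTuple K N,
      ∑ i, (if x i = 0 then 0 else
          p i * ((Nat.factorial (N - 1) : ℝ) /
              ((Nat.factorial (x i - 1) : ℝ) *
                ∏ j ∈ Finset.univ.erase i, (Nat.factorial (x j) : ℝ)))
            * (p i + δ * (1 - p i)) ^ (x i - 1)
            * ∏ j ∈ Finset.univ.erase i, (p j * (1 - δ)) ^ (x j)) = 1 :=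
  fk_generalized_multinomial_sums_to_one_general K N hN p hsum δ
end
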